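/- Under a one-factor model Σ = σ²ββᵀ + Δ with β nondecreasing and Σ_j β_j/δ_j² > 0, the long-only minimum variance portfolio w satisfies: w_i > 0 if and only if β_i < (1/σ² + Σ_{j=1}^k β_j²/δ_j²) / (Σ_{j=1}^k β_j/δ_j²), where k = |{i : w_i > 0}| and the active set equals {1,…,k}. -/

import Mathlib

/-!
Moving mass `t` from an active asset `i` to an asset `j` stays in the simplex and changes the
variance by `2t((Σw)_j - (Σw)_i) + O(t²)`, so `(Σw)_i = λ := wᵀΣw` on the active set `K` and
`(Σw)_j ≥ λ` everywhere. In the one-factor model `(Σw)_i = σ²bβ_i + δ_i²w_i` with `b = βᵀw`, hence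
`i ∈ K ↔ σ²bβ_i < λ`. Solving for `w` on `K` and summing gives `σ²b(1/σ² + B_K) = λC_K`, with
`B_K = Σ_K β_j²/δ_j²` and `C_K = Σ_K β_j/δ_j²`. If `b ≤ 0` then `C_K ≤ 0` and every inactive
asset has `β_j ≤ 0`, contradicting `Σ_j β_j/δ_j² > 0`; so `b > 0`, `C_K > 0`, and
`i ∈ K ↔ β_i < (1/σ² + B_K)/C_K`. As `β` is monotone, `K` is then a lower set of `Fin p`.
-/

open Matrix Finset Filter Topology

theorem Fin.mem_iff_lt_card_of_isLowerSet {p : ℕ} {K : Finset (Fin p)}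
    (hK : IsLowerSet (K : Set (Fin p))) (i : Fin p) : i ∈ K ↔ (i : ℕ) < #K := by
  constructor
  · intro hi
    have := card_le_card fun j hj => hK (mem_Iic.mp hj) hi
    rw [Fin.card_Iic] at this
    omega
  · intro hlt
    by_contra hi
    have := card_le_card fun j (hj : j ∈ K) =>
      mem_Iio.mpr <| lt_of_not_ge fun hij => hi (hK hij hj)
    rw [Fin.card_Iio] at this
    omega

theorem nonneg_of_forall_mul_add_sq_mul_nonneg {a c ε : ℝ} (hε : 0 < ε)
    (h : ∀ t, 0 < t → t ≤ ε → 0 ≤ t * a + t ^ 2 * c) : 0 ≤ a := by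
  have hlim : Tendsto (fun t => a + t * c) (𝓝[>] 0) (𝓝 a) := by
    have hcont : Continuous fun t : ℝ => a + t * c := by fun_prop
    simpa using (hcont.tendsto 0).mono_left nhdsWithin_le_nhds
  refine ge_of_tendsto hlim ?_
  filter_upwards [Ioo_mem_nhdsGT hε] with t ht
  exact nonneg_of_mul_nonneg_right (by linear_combination h t ht.1 ht.2.le) ht.1

section Simplex

variable {ι : Type*} [Fintype ι]

theorem Matrix.IsSymm.dotProduct_mulVec_add_smul {R : Type*} [CommRing R] {S : Matrix ι ι R}
    (hS : S.IsSymm) (w d : ι → R) (t : R) :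
    (w + t • d) ⬝ᵥ S *ᵥ (w + t • d)
      = w ⬝ᵥ S *ᵥ w + 2 * t * (d ⬝ᵥ S *ᵥ w) + t ^ 2 * (d ⬝ᵥ S *ᵥ d) := by
  have hsymm : w ⬝ᵥ S *ᵥ d = d ⬝ᵥ S *ᵥ w := by
    rw [dotProduct_mulVec, ← mulVec_transpose, hS.eq, dotProduct_comm]
  simp only [mulVec_add, mulVec_smul, add_dotProduct, dotProduct_add, smul_dotProduct,
    dotProduct_smul, smul_eq_mul, hsymm]
  ring

variable [DecidableEq ι]

theorem add_smul_single_sub_single_mem_stdSimplex {w : ι → ℝ} (hw : w ∈ stdSimplex ℝ ι)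
    {i : ι} (j : ι) {t : ℝ} (ht₀ : 0 ≤ t) (hti : t ≤ w i) :
    w + t • (Pi.single j 1 - Pi.single i 1) ∈ stdSimplex ℝ ι := by
  refine ⟨fun x => ?_, ?_⟩
  · have hj : 0 ≤ (Pi.single j 1 : ι → ℝ) x := by
      rcases eq_or_ne x j with rfl | h <;> simp [*]
    rcases eq_or_ne x i with rfl | h
    · simp only [Pi.add_apply, Pi.smul_apply, Pi.sub_apply, Pi.single_eq_same, smul_eq_mul]
      nlinarith
    · simp only [Pi.add_apply, Pi.smul_apply, Pi.sub_apply, Pi.single_eq_of_ne h, smul_eq_mul]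
      nlinarith [hw.1 x]
  · simp [sum_add_distrib, ← mul_sum, sum_sub_distrib, hw.2]

variable {S : Matrix ι ι ℝ} {w : ι → ℝ}

theorem mulVec_apply_le_of_isMinOn_stdSimplex (hS : S.IsSymm) (hw : w ∈ stdSimplex ℝ ι)
    (hmin : IsMinOn (fun v => v ⬝ᵥ S *ᵥ v) (stdSimplex ℝ ι) w) {i : ι} (hi : 0 < w i) (j : ι) :
    (S *ᵥ w) i ≤ (S *ᵥ w) j := by
  set d : ι → ℝ := Pi.single j 1 - Pi.single i 1
  have hd : d ⬝ᵥ S *ᵥ w = (S *ᵥ w) j - (S *ᵥ w) i := by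
    simp [d, sub_dotProduct]
  have hslope := nonneg_of_forall_mul_add_sq_mul_nonneg (a := 2 * (d ⬝ᵥ S *ᵥ w))
    (c := d ⬝ᵥ S *ᵥ d) hi fun t ht hti => by
      have : w ⬝ᵥ S *ᵥ w ≤ (w + t • d) ⬝ᵥ S *ᵥ (w + t • d) :=
        hmin (add_smul_single_sub_single_mem_stdSimplex hw j ht.le hti)
      rw [hS.dotProduct_mulVec_add_smul] at this
      linear_combination this
  linarith

theorem mulVec_apply_eq_of_isMinOn_stdSimplex (hS : S.IsSymm) (hw : w ∈ stdSimplex ℝ ι)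
    (hmin : IsMinOn (fun v => v ⬝ᵥ S *ᵥ v) (stdSimplex ℝ ι) w) {i : ι} (hi : 0 < w i) :
    (S *ᵥ w) i = w ⬝ᵥ S *ᵥ w := by
  calc (S *ᵥ w) i = ∑ j, w j * (S *ᵥ w) i := by rw [← sum_mul, hw.2, one_mul]
    _ = w ⬝ᵥ S *ᵥ w := sum_congr rfl fun j _ => by
        rcases (hw.1 j).eq_or_lt with hj | hj
        · simp [← hj]
        · rw [le_antisymm (mulVec_apply_le_of_isMinOn_stdSimplex hS hw hmin hi j)
            (mulVec_apply_le_of_isMinOn_stdSimplex hS hw hmin hj i)]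

theorem dotProduct_mulVec_le_of_isMinOn_stdSimplex (hS : S.IsSymm) (hw : w ∈ stdSimplex ℝ ι)
    (hmin : IsMinOn (fun v => v ⬝ᵥ S *ᵥ v) (stdSimplex ℝ ι) w) (j : ι) :
    w ⬝ᵥ S *ᵥ w ≤ (S *ᵥ w) j := by
  obtain ⟨i, -, hi⟩ := exists_lt_of_sum_lt (by simp [hw.2] : ∑ _ : ι, (0 : ℝ) < ∑ i, w i)
  rw [← mulVec_apply_eq_of_isMinOn_stdSimplex hS hw hmin hi]
  exact mulVec_apply_le_of_isMinOn_stdSimplex hS hw hmin hi j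

end Simplex

section OneFactor

variable {ι : Type*}

def oneFactorCov [DecidableEq ι] (σ : ℝ) (β δ : ι → ℝ) : Matrix ι ι ℝ :=
  σ ^ 2 • of (fun i j => β i * β j) + diagonal (fun i => δ i ^ 2)

theorem oneFactorCov_isSymm [DecidableEq ι] (σ : ℝ) (β δ : ι → ℝ) :
    (oneFactorCov σ β δ).IsSymm :=
  ((IsSymm.ext fun i j => mul_comm (β j) (β i)).smul _).add (isSymm_diagonal _)

variable [Fintype ι]

theorem oneFactorCov_posDef [DecidableEq ι] (σ : ℝ) (β : ι → ℝ) {δ : ι → ℝ}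
    (hδ : ∀ i, δ i ≠ 0) : (oneFactorCov σ β δ).PosDef := by
  have hβ : (vecMulVec β β).PosSemidef := by simpa using posSemidef_vecMulVec_self_star β
  exact .posSemidef_add (hβ.smul (sq_nonneg σ)) (.diagonal fun i => by have := hδ i; positivity)

theorem oneFactorCov_mulVec_apply [DecidableEq ι] (σ : ℝ) (β δ v : ι → ℝ) (i : ι) :
    (oneFactorCov σ β δ *ᵥ v) i = σ ^ 2 * (β ⬝ᵥ v) * β i + δ i ^ 2 * v i := by
  have hrank : (vecMulVec β β *ᵥ v) i = (β ⬝ᵥ v) * β i := by simp [vecMulVec_mulVec, mul_comm]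
  simp only [oneFactorCov, add_mulVec, smul_mulVec, mulVec_diagonal, Pi.add_apply, Pi.smul_apply]
  rw [← vecMulVec, hrank, smul_eq_mul, mul_assoc]

noncomputable def oneFactorThreshold (σ : ℝ) (β δ : ι → ℝ) (K : Finset ι) : ℝ :=
  (1 / σ ^ 2 + ∑ j ∈ K, β j ^ 2 / δ j ^ 2) / ∑ j ∈ K, β j / δ j ^ 2

/-- First-order conditions for minimising `vᵀ (oneFactorCov σ β δ) v` over the simplex, written
out via `oneFactorCov_mulVec_apply`; `lam` is the multiplier of the budget constraint. -/
structure OneFactorKKT (σ lam : ℝ) (β δ w : ι → ℝ) : Prop where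
  nonneg : ∀ i, 0 ≤ w i
  eq_of_pos : ∀ i, 0 < w i → σ ^ 2 * (β ⬝ᵥ w) * β i + δ i ^ 2 * w i = lam
  le : ∀ i, lam ≤ σ ^ 2 * (β ⬝ᵥ w) * β i + δ i ^ 2 * w i

namespace OneFactorKKT

variable {σ lam : ℝ} {β δ w : ι → ℝ}

theorem pos_iff (h : OneFactorKKT σ lam β δ w) (hδ : ∀ i, δ i ≠ 0) (i : ι) :
    0 < w i ↔ σ ^ 2 * (β ⬝ᵥ w) * β i < lam := by
  constructor
  · intro hi
    have hδi := hδ i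
    have hpos : 0 < δ i ^ 2 * w i := by positivity
    linarith [h.eq_of_pos i hi]
  · intro hlt
    by_contra hi
    have hle := h.le i
    rw [le_antisymm (not_lt.mp hi) (h.nonneg i), mul_zero, add_zero] at hle
    linarith

theorem mul_add_sum_eq (h : OneFactorKKT σ lam β δ w) (hσ : σ ≠ 0) (hδ : ∀ i, δ i ≠ 0) :
    σ ^ 2 * (β ⬝ᵥ w) * (1 / σ ^ 2 + ∑ j ∈ univ.filter (0 < w ·), β j ^ 2 / δ j ^ 2)
      = lam * ∑ j ∈ univ.filter (0 < w ·), β j / δ j ^ 2 := by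
  have hb : β ⬝ᵥ w = ∑ j ∈ univ.filter (0 < w ·), β j * w j :=
    (sum_filter_of_ne fun j _ hj => (h.nonneg j).lt_of_ne' (right_ne_zero_of_mul hj)).symm
  have hbK : β ⬝ᵥ w = ∑ j ∈ univ.filter (0 < w ·),
      (lam * (β j / δ j ^ 2) - σ ^ 2 * (β ⬝ᵥ w) * (β j ^ 2 / δ j ^ 2)) := by
    refine hb.trans (sum_congr rfl fun j hj => ?_)
    have hwj := h.eq_of_pos j (mem_filter.mp hj).2
    have hδj := hδ j
    field_simp
    linear_combination β j * hwj
  rw [sum_sub_distrib, ← mul_sum, ← mul_sum] at hbK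
  field_simp
  linear_combination hbK

theorem of_isMinOn [DecidableEq ι] (hw : w ∈ stdSimplex ℝ ι)
    (hmin : IsMinOn (fun v => v ⬝ᵥ oneFactorCov σ β δ *ᵥ v) (stdSimplex ℝ ι) w) :
    OneFactorKKT σ (w ⬝ᵥ oneFactorCov σ β δ *ᵥ w) β δ w where
  nonneg := hw.1
  eq_of_pos i hi := by
    rw [← oneFactorCov_mulVec_apply]
    exact mulVec_apply_eq_of_isMinOn_stdSimplex (oneFactorCov_isSymm σ β δ) hw hmin hi
  le i := by
    rw [← oneFactorCov_mulVec_apply]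
    exact dotProduct_mulVec_le_of_isMinOn_stdSimplex (oneFactorCov_isSymm σ β δ) hw hmin i

theorem dotProduct_pos (h : OneFactorKKT σ lam β δ w) (hσ : σ ≠ 0) (hδ : ∀ i, δ i ≠ 0)
    (hlam : 0 < lam) (hsum : 0 < ∑ j, β j / δ j ^ 2) : 0 < β ⬝ᵥ w := by
  by_contra! hb
  have hσb : σ ^ 2 * (β ⬝ᵥ w) ≤ 0 := mul_nonpos_of_nonneg_of_nonpos (sq_nonneg σ) hb
  have hactive : ∑ j ∈ univ.filter (0 < w ·), β j / δ j ^ 2 ≤ 0 := by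
    refine nonpos_of_mul_nonpos_right ?_ hlam
    rw [← h.mul_add_sum_eq hσ hδ]
    exact mul_nonpos_of_nonpos_of_nonneg hσb (by positivity)
  have hinactive : ∑ j ∈ univ.filter (fun j => ¬ 0 < w j), β j / δ j ^ 2 ≤ 0 :=
    sum_nonpos fun j hj => by
      have hle := h.le j
      rw [le_antisymm (not_lt.mp (mem_filter.mp hj).2) (h.nonneg j), mul_zero, add_zero] at hle
      have hβj : β j ≤ 0 := by nlinarith
      exact div_nonpos_of_nonpos_of_nonneg hβj (sq_nonneg _)
  rw [← sum_filter_add_sum_filter_not univ (0 < w ·)] at hsum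
  linarith

theorem pos_iff_lt_oneFactorThreshold (h : OneFactorKKT σ lam β δ w) (hσ : σ ≠ 0)
    (hδ : ∀ i, δ i ≠ 0) (hlam : 0 < lam) (hsum : 0 < ∑ j, β j / δ j ^ 2) (i : ι) :
    0 < w i ↔ β i < oneFactorThreshold σ β δ (univ.filter (0 < w ·)) := by
  have hid := h.mul_add_sum_eq hσ hδ
  have hσb : 0 < σ ^ 2 * (β ⬝ᵥ w) := mul_pos (by positivity) (h.dotProduct_pos hσ hδ hlam hsum)
  have hC : 0 < ∑ j ∈ univ.filter (0 < w ·), β j / δ j ^ 2 :=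
    pos_of_mul_pos_right (hid ▸ mul_pos hσb (by positivity)) hlam.le
  rw [h.pos_iff hδ, oneFactorThreshold, lt_div_iff₀ hC]
  constructor <;> intro <;> nlinarith

end OneFactorKKT

end OneFactor

theorem stmt11 {p : ℕ} (β δ : Fin p → ℝ) (σ : ℝ)
    (hβ : Monotone β) (hδ : ∀ i, 0 < δ i) (hσ : 0 < σ)
    (hsum : 0 < ∑ j, β j / (δ j) ^ 2)
    (S : Matrix (Fin p) (Fin p) ℝ)
    (hSdef : S = σ ^ 2 • (Matrix.of fun i j => β i * β j)
      + Matrix.diagonal (fun i => (δ i) ^ 2))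
    (w : Fin p → ℝ) (hwsum : ∑ i, w i = 1) (hnn : ∀ i, 0 ≤ w i)
    (hmin : ∀ v : Fin p → ℝ, (∑ i, v i = 1) → (∀ i, 0 ≤ v i) →
      w ⬝ᵥ S *ᵥ w ≤ v ⬝ᵥ S *ᵥ v) :
    let K : Finset (Fin p) := Finset.univ.filter (fun i => 0 < w i)
    let k : ℕ := K.card
    let BK : ℝ := 1 / σ ^ 2 + ∑ j ∈ Finset.univ.filter (fun j : Fin p => (j : ℕ) < k),
      (β j) ^ 2 / (δ j) ^ 2
    let CK : ℝ := ∑ j ∈ Finset.univ.filter (fun j : Fin p => (j : ℕ) < k),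
      β j / (δ j) ^ 2
    (∀ i : Fin p, i ∈ K ↔ (i : ℕ) < k) ∧
    (∀ i : Fin p, 0 < w i ↔ β i < BK / CK) := by
  intro K k BK CK
  have hδ₀ : ∀ i, δ i ≠ 0 := fun i => (hδ i).ne'
  have hw : w ∈ stdSimplex ℝ (Fin p) := ⟨hnn, hwsum⟩
  have hw₀ : w ≠ 0 := fun h => by simp [h] at hwsum
  change S = oneFactorCov σ β δ at hSdef
  subst hSdef
  have hvar : 0 < w ⬝ᵥ oneFactorCov σ β δ *ᵥ w := by
    simpa using (oneFactorCov_posDef σ β hδ₀).dotProduct_mulVec_pos hw₀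
  have hthr := (OneFactorKKT.of_isMinOn hw fun v hv => hmin v hv.2 hv.1)
    |>.pos_iff_lt_oneFactorThreshold hσ.ne' hδ₀ hvar hsum
  have hK : ∀ i : Fin p, i ∈ K ↔ (i : ℕ) < k := Fin.mem_iff_lt_card_of_isLowerSet
    fun i j hji hi => by
      simp only [K, coe_filter, Set.mem_ofPred_eq, mem_univ, true_and] at hi ⊢
      exact (hthr j).2 ((hβ hji).trans_lt ((hthr i).1 hi))
  have hfilter : univ.filter (fun j : Fin p => (j : ℕ) < k) = K := by
    ext i
    simp [hK]
  refine ⟨hK, fun i => ?_⟩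
  rw [hthr i, oneFactorThreshold]
  simp only [BK, CK, hfilter]
  rfl
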